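/- For the Tate normal curve E₅ : y² + (1−α)xy − αy = x³ − αx² with parameter α ≠ 0 and P = (0,0) of order 5, the numerator G_n of the x-coordinate of [n]P satisfies: G_n = 0 if n ≡ 1, 4 (mod 5); G_n = α^{(4n²)/5} if n ≡ 0 (mod 5); and G_n = α^{(4n²−1)/5} if n ≡ 2, 3 (mod 5). -/

import Mathlib

/-!
Put `β = -α`. At `P = (0, 0)` the division values `hₙ = ψₙ(P)` form the normalised elliptic
divisibility sequence with `b = β`, `c = β³`, `d = β⁵`, and `Gₙ = -hₙ₊₁hₙ₋₁` because `x(P) = 0`.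
Since `5P = 0` this sequence is quasi-periodic: `hₙ₊₅ = -β ^ (4n + 10) hₙ`. Both defining
recurrences of the sequence are invariant under the shift `n ↦ n + 5` (each side is multiplied by
the same power of `β`), so the quasi-periodic sequence satisfies them once they are checked for
the first five indices. Hence `hₙ = (-1) ^ ⌊n/5⌋ β ^ ⌊2n²/5⌋` for `5 ∤ n` and `hₙ = 0` for `5 ∣ n`,
from which `Gₙ` is read off.
-/

open Polynomial

/-- The Tate normal form `E₅ : y² + (1-α)xy - αy = x³ - αx²` with parameter `α`. -/
def E5 (α : ℚ) : WeierstrassCurve.Affine ℚ :=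
  { a₁ := 1 - α, a₂ := -α, a₃ := -α, a₄ := 0, a₆ := 0 }

section TateEDS

variable {R : Type*} [CommRing R] (β : R)

def tateEDS : ℕ → R
  | 0 => 0
  | 1 => 1
  | 2 => β
  | 3 => β ^ 3
  | 4 => β ^ 6
  | n + 5 => -β ^ (4 * n + 10) * tateEDS n

lemma tateEDS_add_five (n : ℕ) : tateEDS β (n + 5) = -β ^ (4 * n + 10) * tateEDS β n := by
  rw [tateEDS]

lemma tateEDS_add_ten (n : ℕ) : tateEDS β (n + 10) = β ^ (8 * n + 40) * tateEDS β n := by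
  rw [tateEDS_add_five, tateEDS_add_five]
  ring

lemma tateEDS_five_mul_add (q r : ℕ) :
    tateEDS β (5 * q + r) = (-1) ^ q * β ^ (10 * q ^ 2 + 4 * q * r) * tateEDS β r := by
  induction q with
  | zero => simp
  | succ q ih =>
    rw [show 5 * (q + 1) + r = 5 * q + r + 5 by ring, tateEDS_add_five, ih]
    ring

lemma tateEDS_five_mul (q : ℕ) : tateEDS β (5 * q) = 0 := by
  simpa [tateEDS] using tateEDS_five_mul_add β q 0

lemma tateEDS_five_mul_add_mul (q r s : ℕ) :
    tateEDS β (5 * q + r) * tateEDS β (5 * q + s) =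
      β ^ (20 * q ^ 2 + 4 * q * (r + s)) * tateEDS β r * tateEDS β s := by
  have hsign : ((-1 : R) ^ q) ^ 2 = 1 := by rw [← pow_mul, pow_mul', neg_one_sq, one_pow]
  rw [tateEDS_five_mul_add, tateEDS_five_mul_add]
  linear_combination β ^ (20 * q ^ 2 + 4 * q * (r + s)) * tateEDS β r * tateEDS β s * hsign

lemma tateEDS_five_mul_add_three_mul (q : ℕ) :
    tateEDS β (5 * q + 3) * tateEDS β (5 * q + 1) = β ^ (20 * q ^ 2 + 16 * q + 3) := by
  rw [tateEDS_five_mul_add_mul]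
  simp only [tateEDS]
  ring

lemma tateEDS_five_mul_add_four_mul (q : ℕ) :
    tateEDS β (5 * q + 4) * tateEDS β (5 * q + 2) = β ^ (20 * q ^ 2 + 24 * q + 7) := by
  rw [tateEDS_five_mul_add_mul]
  simp only [tateEDS]
  ring

lemma tateEDS_five_mul_add_six_mul (q : ℕ) :
    tateEDS β (5 * q + 6) * tateEDS β (5 * q + 4) = -β ^ (20 * (q + 1) ^ 2) := by
  rw [show 5 * q + 6 = 5 * q + 1 + 5 by ring, tateEDS_add_five, mul_assoc,
    tateEDS_five_mul_add_mul]
  simp only [tateEDS]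
  ring

lemma tateEDS_even_rec (m : ℕ) :
    tateEDS β (2 * (m + 3)) * β =
      tateEDS β (m + 2) ^ 2 * tateEDS β (m + 3) * tateEDS β (m + 5) -
        tateEDS β (m + 1) * tateEDS β (m + 3) * tateEDS β (m + 4) ^ 2 := by
  induction m using Nat.strong_induction_on with
  | _ m ih =>
  rcases lt_or_ge m 5 with hm | hm
  · interval_cases m <;> simp only [tateEDS, Nat.reduceMul, Nat.reduceAdd] <;> ring
  obtain ⟨m, rfl⟩ := Nat.exists_eq_add_of_le' hm
  rw [show 2 * (m + 5 + 3) = 2 * (m + 3) + 10 by ring, tateEDS_add_ten,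
    show m + 5 + 1 = m + 1 + 5 by ring, show m + 5 + 2 = m + 2 + 5 by ring,
    show m + 5 + 3 = m + 3 + 5 by ring, show m + 5 + 4 = m + 4 + 5 by ring,
    tateEDS_add_five β (m + 1), tateEDS_add_five β (m + 2), tateEDS_add_five β (m + 3),
    tateEDS_add_five β (m + 4), tateEDS_add_five β (m + 5)]
  linear_combination β ^ (16 * m + 88) * ih m (by omega)

lemma tateEDS_odd_rec (m : ℕ) :
    tateEDS β (2 * (m + 2) + 1) =
      tateEDS β (m + 4) * tateEDS β (m + 2) ^ 3 - tateEDS β (m + 1) * tateEDS β (m + 3) ^ 3 := by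
  induction m using Nat.strong_induction_on with
  | _ m ih =>
  rcases lt_or_ge m 5 with hm | hm
  · interval_cases m <;> simp only [tateEDS, Nat.reduceMul, Nat.reduceAdd] <;> ring
  obtain ⟨m, rfl⟩ := Nat.exists_eq_add_of_le' hm
  rw [show 2 * (m + 5 + 2) + 1 = 2 * (m + 2) + 1 + 10 by ring, tateEDS_add_ten,
    show m + 5 + 1 = m + 1 + 5 by ring, show m + 5 + 2 = m + 2 + 5 by ring,
    show m + 5 + 3 = m + 3 + 5 by ring, show m + 5 + 4 = m + 4 + 5 by ring,
    tateEDS_add_five β (m + 1), tateEDS_add_five β (m + 2), tateEDS_add_five β (m + 3),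
    tateEDS_add_five β (m + 4)]
  linear_combination β ^ (16 * m + 80) * ih m (by omega)

lemma normEDS_eq_tateEDS [IsDomain R] (hβ : β ≠ 0) (n : ℕ) :
    normEDS β (β ^ 3) (β ^ 5) n = tateEDS β n := by
  induction n using normEDSRec with
  | zero => simp [tateEDS]
  | one => simp [tateEDS]
  | two => simp [tateEDS]
  | three => simp [tateEDS]
  | four =>
    simp only [Nat.cast_ofNat, normEDS_four, tateEDS]
    ring
  | even m h1 h2 h3 h4 h5 =>
    refine mul_right_cancel₀ hβ ?_
    have hrec := normEDS_even β (β ^ 3) (β ^ 5) (m + 3)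
    push_cast at h1 h2 h3 h4 h5 hrec ⊢
    rw [tateEDS_even_rec, hrec, ← h1, ← h2, ← h3, ← h4, ← h5]
    ring_nf
  | odd m h1 h2 h3 h4 =>
    have hrec := normEDS_odd β (β ^ 3) (β ^ 5) (m + 2)
    push_cast at h1 h2 h3 h4 hrec ⊢
    rw [tateEDS_odd_rec, hrec, ← h1, ← h2, ← h3, ← h4]
    ring_nf

end TateEDS

namespace WeierstrassCurve

variable {R : Type*} [CommRing R] (W : WeierstrassCurve R)

lemma evalEval_ψ (x y : R) (n : ℤ) :
    (W.ψ n).evalEval x y = normEDS (W.ψ₂.evalEval x y) (W.Ψ₃.eval x) (W.preΨ₄.eval x) n := by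
  rw [WeierstrassCurve.ψ, ← coe_evalEvalRingHom, map_normEDS]
  simp only [coe_evalEvalRingHom, evalEval_C]

lemma evalEval_zero_φ (y : R) (n : ℤ) :
    (W.φ n).evalEval 0 y = -((W.ψ (n + 1)).evalEval 0 y * (W.ψ (n - 1)).evalEval 0 y) := by
  simp [WeierstrassCurve.φ, evalEval_C]

end WeierstrassCurve

lemma E5_evalEval_ψ (α : ℚ) (n : ℤ) :
    ((E5 α).ψ n).evalEval 0 0 = normEDS (-α) ((-α) ^ 3) ((-α) ^ 5) n := by
  rw [WeierstrassCurve.evalEval_ψ]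
  congr 1
  · simp [WeierstrassCurve.ψ₂, E5, WeierstrassCurve.Affine.evalEval_polynomialY_zero]
  · simp [WeierstrassCurve.Ψ₃, WeierstrassCurve.b₈, E5]
    ring
  · simp [WeierstrassCurve.preΨ₄, WeierstrassCurve.b₈, WeierstrassCurve.b₆,
      WeierstrassCurve.b₄, E5]
    ring

lemma E5_evalEval_φ_succ (α : ℚ) (hα : α ≠ 0) (n : ℕ) :
    ((E5 α).φ (n + 1 : ℕ)).evalEval 0 0 = -(tateEDS (-α) (n + 2) * tateEDS (-α) n) := by
  have hβ : -α ≠ 0 := neg_ne_zero.mpr hα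
  rw [WeierstrassCurve.evalEval_zero_φ, E5_evalEval_ψ, E5_evalEval_ψ,
    show ((n + 1 : ℕ) : ℤ) + 1 = (n + 2 : ℕ) by push_cast; ring,
    show ((n + 1 : ℕ) : ℤ) - 1 = n by push_cast; ring,
    normEDS_eq_tateEDS _ hβ, normEDS_eq_tateEDS _ hβ]

theorem stmt_18_general (α : ℚ) (hα : α ≠ 0) (n : ℕ) :
    (n % 5 = 1 ∨ n % 5 = 4 → evalEval 0 0 ((E5 α).φ (n : ℤ)) = 0) ∧
    (n % 5 = 0 → evalEval 0 0 ((E5 α).φ (n : ℤ)) = α ^ (4 * n ^ 2 / 5)) ∧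
    (n % 5 = 2 ∨ n % 5 = 3 → evalEval 0 0 ((E5 α).φ (n : ℤ)) = α ^ ((4 * n ^ 2 - 1) / 5)) := by
  rcases n with _ | n
  · simp
  obtain ⟨q, r, hr, rfl⟩ : ∃ q r, r < 5 ∧ n = 5 * q + r :=
    ⟨n / 5, n % 5, Nat.mod_lt _ (by norm_num), (Nat.div_add_mod n 5).symm⟩
  rw [E5_evalEval_φ_succ α hα]
  interval_cases r
  all_goals simp only [add_zero, add_assoc, Nat.reduceAdd]
  · exact ⟨fun _ => by rw [tateEDS_five_mul, mul_zero, neg_zero], by omega, by omega⟩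
  · refine ⟨by omega, by omega, fun _ => ?_⟩
    rw [tateEDS_five_mul_add_three_mul, ← Odd.neg_pow ⟨10 * q ^ 2 + 8 * q + 1, by ring⟩, neg_neg]
    exact congrArg _ (Nat.div_eq_of_eq_mul_left (by norm_num) (Nat.sub_eq_of_eq_add (by ring))).symm
  · refine ⟨by omega, by omega, fun _ => ?_⟩
    rw [tateEDS_five_mul_add_four_mul, ← Odd.neg_pow ⟨10 * q ^ 2 + 12 * q + 3, by ring⟩, neg_neg]
    exact congrArg _ (Nat.div_eq_of_eq_mul_left (by norm_num) (Nat.sub_eq_of_eq_add (by ring))).symm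
  · refine ⟨fun _ => ?_, by omega, by omega⟩
    rw [show 5 * q + 5 = 5 * (q + 1) by ring, tateEDS_five_mul, zero_mul, neg_zero]
  · refine ⟨by omega, fun _ => ?_, by omega⟩
    rw [tateEDS_five_mul_add_six_mul, neg_neg, Even.neg_pow ⟨10 * (q + 1) ^ 2, by ring⟩]
    exact congrArg _ (Nat.div_eq_of_eq_mul_left (by norm_num) (by ring)).symm

/-- For the Tate normal curve `E₅` with `α ≠ 0` and torsion point `P = (0, 0)`
of order `5`, the numerator `Gₙ = φₙ(P)` of the `x`-coordinate of `[n]P`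
satisfies `Gₙ = 0` if `n ≡ 1, 4 (mod 5)`, `Gₙ = α ^ (4n²/5)` if `n ≡ 0 (mod 5)`,
and `Gₙ = α ^ ((4n²-1)/5)` if `n ≡ 2, 3 (mod 5)`. -/
theorem stmt_18 (α : ℚ) (hα : α ≠ 0) (h : (E5 α).Nonsingular 0 0)
    (horder : addOrderOf (WeierstrassCurve.Affine.Point.some 0 0 h) = 5) (n : ℕ) :
    (n % 5 = 1 ∨ n % 5 = 4 → evalEval 0 0 ((E5 α).φ (n : ℤ)) = 0) ∧
    (n % 5 = 0 → evalEval 0 0 ((E5 α).φ (n : ℤ)) = α ^ (4 * n ^ 2 / 5)) ∧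
    (n % 5 = 2 ∨ n % 5 = 3 → evalEval 0 0 ((E5 α).φ (n : ℤ)) = α ^ ((4 * n ^ 2 - 1) / 5)) :=
  stmt_18_general α hα n
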